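/- arXiv:1801.07162 — 2 statements merged into one kernel-verified Lean document; each statement's English description precedes it below -/
import Mathlib

section
/- Let S = {X_α, p^β_α, α < β < τ} be an almost continuous inverse system with skeletal bonding maps, X = a-lim S, and U, V ⊆ X open with finite ranks q(U), q(V) and cl(U) ∩ cl(V) = ∅. If q(U) ∩ q(V) ∩ [γ, τ) = ∅ for some γ < τ, then Int cl(p_γ(U)) ∩ Int cl(p_γ(V)) = ∅. -/
open Topology Order

universe u

/-- An inverse system of topological spaces indexed by the ordinals below `τ`,
with continuous surjective bonding maps. -/
structure InvSystem (τ : Ordinal.{u}) where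
  X : Ordinal.{u} → Type u
  topo : ∀ α, TopologicalSpace (X α)
  p : ∀ α β, α ≤ β → X β → X α
  p_cont : ∀ α β (h : α ≤ β), Continuous (p α β h)
  p_surj : ∀ α β (h : α ≤ β), β < τ → Function.Surjective (p α β h)
  p_id : ∀ α (x : X α), p α α le_rfl x = x
  p_comp : ∀ α β γ (h₁ : α ≤ β) (h₂ : β ≤ γ) (x : X γ),
    p α β h₁ (p β γ h₂ x) = p α γ (h₁.trans h₂) x

attribute [instance] InvSystem.topo

namespace InvSystem

variable {τ : Ordinal.{u}} (S : InvSystem τ)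

/-- The inverse limit of the subsystem indexed by the ordinals below `γ`. -/
def lim (γ : Ordinal.{u}) : Set (∀ α : {o : Ordinal.{u} // o < γ}, S.X α.1) :=
  {f | ∀ (a b : {o : Ordinal.{u} // o < γ}) (h : a.1 ≤ b.1), S.p a.1 b.1 h (f b) = f a}

/-- The canonical map from `X γ` to the inverse limit of the subsystem below `γ`. -/
def diag (γ : Ordinal.{u}) (x : S.X γ) : ↥(S.lim γ) :=
  ⟨fun a => S.p a.1 γ a.2.le x, fun a b h => S.p_comp a.1 b.1 γ h b.2.le x⟩

/-- The system is almost continuous: for every limit ordinal `γ < τ`, `X γ` embeds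
densely into the inverse limit of the subsystem below `γ`, compatibly with the
projections. -/
def AlmostContinuous : Prop :=
  ∀ γ : Ordinal.{u}, γ < τ → Order.IsSuccLimit γ →
    Topology.IsEmbedding (S.diag γ) ∧ DenseRange (S.diag γ)

variable (A : Set (∀ α : {o : Ordinal.{u} // o < τ}, S.X α.1))

/-- The `α`-th limit projection restricted to `A`. -/
def proj (α : Ordinal.{u}) (h : α < τ) : ↥A → S.X α :=
  fun x => x.1 ⟨α, h⟩

/-- `A` is the almost limit of `S`: it is a subspace of the inverse limit whose
projections are onto the `X α`. -/
def IsALim : Prop :=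
  A ⊆ S.lim τ ∧ ∀ (α : Ordinal.{u}) (h : α < τ), Function.Surjective (S.proj A α h)

/-- The rank of a subset `U` of the almost limit `A`. -/
def rank (U : Set ↥A) : Set Ordinal.{u} :=
  {α | ∃ h : succ α < τ,
    (interior ((S.p α (succ α) (le_succ α) ⁻¹'
        closure (S.proj A α ((lt_succ α).trans h) '' U)) \
      closure (S.proj A (succ α) h '' U))).Nonempty}

end InvSystem

/-- A continuous map is skeletal if the interior of the closure of the image of
every nonempty open set is nonempty. -/
def IsSkeletalMap {X Y : Type*} [TopologicalSpace X] [TopologicalSpace Y] (f : X → Y) : Prop :=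
  Continuous f ∧
  ∀ U : Set X, IsOpen U → U.Nonempty → (interior (closure (f '' U))).Nonempty

/-- A continuous map is nearly open if `f(U) ⊆ Int cl f(U)` for every open `U`. -/
def IsNearlyOpenMap {X Y : Type*} [TopologicalSpace X] [TopologicalSpace Y] (f : X → Y) : Prop :=
  ∀ U : Set X, IsOpen U → f '' U ⊆ interior (closure (f '' U))

/-!
Write `W_β(T) = Int cl p_β(T)`. At a level `β ∉ q(T)` the bonding map pulls `W_β(T)` back into
`W_{β+1}(T)`; since by almost continuity a limit level carries the topology of the levels below
it, this propagates through limits, so `(p^β_α)⁻¹ W_α(T) ⊆ W_β(T)` whenever `q(T) ∩ [α, β) = ∅`.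

If `W_γ(U) ∩ W_γ(V) ≠ ∅`, this stays true at every level above `γ`. At a successor step one of
the sets, say `V`, is not ranked; as the projections of `a-lim S` are skeletal, the open set
`U ∩ p_β⁻¹(W_β(U) ∩ W_β(V))` produces a nonempty open subset of `W_{β+1}(U)` that meets the
pullback of `W_β(V)`. At a limit level, the finitely many ranks below it are bounded below it,
and we use the rank-free transfer from there. Once above all ranks, a point `x` with
`p_β(x) ∈ W_β(U) ∩ W_β(V)` lies in `cl U ∩ cl V`, because each neighbourhood of `x` is
determined by a single higher coordinate `δ`, where `p_δ(x) ∈ W_δ(U) ∩ W_δ(V)`.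
-/

theorem Set.Finite.exists_mem_Ico_mem_upperBounds {α : Type*} [LinearOrder α] {F : Set α}
    (hF : F.Finite) {a b : α} (hab : a < b) (hFb : ∀ x ∈ F, x < b) :
    ∃ c ∈ Set.Ico a b, c ∈ upperBounds F := by
  obtain ⟨c, hc, hmax⟩ := Set.exists_max_image _ id (hF.insert a) (Set.insert_nonempty a F)
  refine ⟨c, ⟨hmax a (Set.mem_insert a F), ?_⟩, fun x hx => hmax x (Set.mem_insert_of_mem a hx)⟩
  rcases hc with rfl | hc
  exacts [hab, hFb c hc]

theorem Ordinal.exists_disjoint_Ico {F : Set Ordinal.{u}} (hF : F.Finite) {γ β : Ordinal.{u}}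
    (hγβ : γ < β) (hFβ : ∀ σ ∈ F, σ < β → succ σ < β) :
    ∃ α ∈ Set.Ico γ β, Disjoint F (Set.Ico α β) := by
  obtain ⟨α, hα_mem, hα⟩ :=
    ((hF.inter_of_left (Set.Iio β)).image succ).exists_mem_Ico_mem_upperBounds hγβ
      (by rintro _ ⟨σ, ⟨hσ, hσβ⟩, rfl⟩; exact hFβ σ hσ hσβ)
  refine ⟨α, hα_mem, Set.disjoint_left.2 fun σ hσ ⟨hασ, hσβ⟩ => ?_⟩
  exact (lt_succ σ).not_ge ((hα ⟨σ, ⟨hσ, hσβ⟩, rfl⟩).trans hασ)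

namespace InvSystem

variable {τ : Ordinal.{u}} {S : InvSystem τ}
  {A : Set (∀ α : {o : Ordinal.{u} // o < τ}, S.X α.1)}

theorem proj_continuous (α : Ordinal.{u}) (h : α < τ) : Continuous (S.proj A α h) :=
  (continuous_apply (⟨α, h⟩ : {o : Ordinal.{u} // o < τ})).comp continuous_subtype_val

theorem p_proj (hA : A ⊆ S.lim τ) {α β : Ordinal.{u}} (hab : α ≤ β) (hb : β < τ) (x : ↥A) :
    S.p α β hab (S.proj A β hb x) = S.proj A α (hab.trans_lt hb) x :=
  hA x.2 ⟨α, hab.trans_lt hb⟩ ⟨β, hb⟩ hab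

theorem p_image_proj_image (hA : A ⊆ S.lim τ) {α β : Ordinal.{u}} (hab : α ≤ β) (hb : β < τ)
    (T : Set ↥A) :
    S.p α β hab '' (S.proj A β hb '' T) = S.proj A α (hab.trans_lt hb) '' T := by
  rw [Set.image_image]
  exact Set.image_congr fun x _ => p_proj hA hab hb x

theorem exists_isOpen_coord_subset {γ : Ordinal.{u}} {Y : Type*} [TopologicalSpace Y]
    {g : Y → ∀ a : {o : Ordinal.{u} // o < γ}, S.X a.1} (hg : IsInducing g)
    (hgS : ∀ y, g y ∈ S.lim γ) {O : Set Y} (hO : IsOpen O) {y : Y} (hy : y ∈ O)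
    {β₀ : Ordinal.{u}} (hβ₀ : β₀ < γ) :
    ∃ δ, ∃ hδ : δ < γ, β₀ ≤ δ ∧ ∃ O' : Set (S.X δ), IsOpen O' ∧ g y ⟨δ, hδ⟩ ∈ O' ∧
      ∀ z, g z ⟨δ, hδ⟩ ∈ O' → z ∈ O := by
  obtain ⟨t, ht, rfl⟩ := hg.isOpen_iff.1 hO
  obtain ⟨I, u, hu, hIt⟩ := isOpen_pi_iff.1 ht (g y) hy
  obtain ⟨δ, ⟨hβ₀δ, hδ⟩, hIδ⟩ :=
    (I.finite_toSet.image Subtype.val).exists_mem_Ico_mem_upperBounds hβ₀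
      (by rintro _ ⟨a, -, rfl⟩; exact a.2)
  have hle : ∀ a : I, a.1.1 ≤ δ := fun a => hIδ ⟨a.1, a.2, rfl⟩
  have hcoord : ∀ z (a : I), S.p a.1.1 δ (hle a) (g z ⟨δ, hδ⟩) = g z a :=
    fun z a => hgS z a ⟨δ, hδ⟩ (hle a)
  refine ⟨δ, hδ, hβ₀δ, ⋂ a : I, S.p a.1.1 δ (hle a) ⁻¹' u a, ?_, ?_, ?_⟩
  · exact isOpen_iInter_of_finite fun a => (hu a a.2).1.preimage (S.p_cont _ _ _)
  · exact Set.mem_iInter.2 fun a => by rw [Set.mem_preimage, hcoord]; exact (hu a a.2).2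
  · intro z hz
    refine hIt fun a ha => ?_
    rw [← hcoord z ⟨a, ha⟩]
    exact Set.mem_iInter.1 hz ⟨a, ha⟩

theorem mem_closure_of_forall_coord {γ : Ordinal.{u}} {Y : Type*} [TopologicalSpace Y]
    {g : Y → ∀ a : {o : Ordinal.{u} // o < γ}, S.X a.1} (hg : IsInducing g)
    (hgS : ∀ y, g y ∈ S.lim γ) {P : Set Y} {y : Y} {β₀ : Ordinal.{u}} (hβ₀ : β₀ < γ)
    (hy : ∀ δ (hδ : δ < γ), β₀ ≤ δ →
      g y ⟨δ, hδ⟩ ∈ closure ((fun z => g z ⟨δ, hδ⟩) '' P)) :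
    y ∈ closure P := by
  refine mem_closure_iff.2 fun O hO hyO => ?_
  obtain ⟨δ, hδ, hβ₀δ, O', hO', hyO', hO'O⟩ := exists_isOpen_coord_subset hg hgS hO hyO hβ₀
  obtain ⟨_, hzO', z, hzP, rfl⟩ := mem_closure_iff.1 (hy δ hδ hβ₀δ) O' hO' hyO'
  exact ⟨z, hO'O z hzO', hzP⟩

theorem proj_isSkeletalMap
    (hskel : ∀ (α β : Ordinal.{u}) (h : α ≤ β), β < τ → IsSkeletalMap (S.p α β h))
    (hA : S.IsALim A) (α : Ordinal.{u}) (hα : α < τ) : IsSkeletalMap (S.proj A α hα) := by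
  refine ⟨proj_continuous α hα, fun U hU ⟨x, hx⟩ => ?_⟩
  obtain ⟨δ, hδ, hαδ, O', hO', hxO', hO'U⟩ :=
    exists_isOpen_coord_subset IsInducing.subtypeVal (fun y => hA.1 y.2) hU hx hα
  refine ((hskel α δ hαδ hδ).2 O' hO' ⟨_, hxO'⟩).mono (interior_mono (closure_mono ?_))
  rintro _ ⟨w, hw, rfl⟩
  obtain ⟨y, rfl⟩ := hA.2 δ hδ w
  exact ⟨y, hO'U y hw, (p_proj hA.1 hαδ hδ y).symm⟩

theorem preimage_interior_closure_subset_succ {T : Set ↥A} {β : Ordinal.{u}}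
    (hβ : succ β < τ) (hβT : β ∉ S.rank A T) :
    S.p β (succ β) (le_succ β) ⁻¹' interior (closure (S.proj A β ((lt_succ β).trans hβ) '' T))
      ⊆ interior (closure (S.proj A (succ β) hβ '' T)) := by
  have hG : IsOpen (S.p β (succ β) (le_succ β) ⁻¹'
      interior (closure (S.proj A β ((lt_succ β).trans hβ) '' T))) :=
    isOpen_interior.preimage (S.p_cont _ _ _)
  refine interior_maximal (fun z hz => ?_) hG
  by_contra hzT
  refine hβT ⟨hβ, z, interior_maximal ?_ (hG.sdiff isClosed_closure) ⟨hz, hzT⟩⟩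
  exact Set.sdiff_subset_sdiff_left (Set.preimage_mono interior_subset)

theorem preimage_interior_closure_subset (hac : S.AlmostContinuous) (hA : A ⊆ S.lim τ)
    (T : Set ↥A) {α β : Ordinal.{u}} (hab : α ≤ β) (hβ : β < τ)
    (hT : Disjoint (S.rank A T) (Set.Ico α β)) :
    S.p α β hab ⁻¹' interior (closure (S.proj A α (hab.trans_lt hβ) '' T))
      ⊆ interior (closure (S.proj A β hβ '' T)) := by
  induction β using WellFoundedLT.induction with
  | _ β IH =>
  rcases hab.eq_or_lt with rfl | hlt
  · intro z hz
    rwa [Set.mem_preimage, S.p_id] at hz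
  rcases Ordinal.zero_or_succ_or_isSuccLimit β with rfl | ⟨σ, rfl⟩ | hlim
  · exact absurd hlt (not_lt_bot (a := α))
  · have hασ : α ≤ σ := lt_succ_iff.1 hlt
    intro z hz
    refine preimage_interior_closure_subset_succ hβ (Set.disjoint_right.1 hT ⟨hασ, lt_succ σ⟩) ?_
    refine IH σ (lt_succ σ) hασ _ (hT.mono_right (Set.Ico_subset_Ico_right (le_succ σ))) ?_
    rwa [Set.mem_preimage, S.p_comp]
  · refine interior_maximal (fun y hy => ?_) (isOpen_interior.preimage (S.p_cont _ _ _))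
    refine mem_closure_of_forall_coord
      (IsInducing.subtypeVal.comp (hac β hβ hlim).1.isInducing) (fun z => (S.diag β z).2) hlt
      fun δ hδ hαδ => ?_
    show S.p δ β hδ.le y ∈ closure (S.p δ β hδ.le '' (S.proj A β hβ '' T))
    rw [p_image_proj_image hA]
    refine interior_subset (IH δ hδ hαδ _ (hT.mono_right (Set.Ico_subset_Ico_right hδ.le)) ?_)
    rwa [Set.mem_preimage, S.p_comp]

theorem mem_closure_of_proj_mem_interior_closure (hac : S.AlmostContinuous)
    (hA : A ⊆ S.lim τ) {T : Set ↥A} {β₀ : Ordinal.{u}} (hβ₀ : β₀ < τ)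
    (hT : Disjoint (S.rank A T) (Set.Ico β₀ τ)) {x : ↥A}
    (hx : S.proj A β₀ hβ₀ x ∈ interior (closure (S.proj A β₀ hβ₀ '' T))) : x ∈ closure T :=
  mem_closure_of_forall_coord IsInducing.subtypeVal (fun y => hA y.2) hβ₀ fun δ hδ hβ₀δ =>
    interior_subset <| preimage_interior_closure_subset hac hA T hβ₀δ hδ
      (hT.mono_right (Set.Ico_subset_Ico_right hδ.le))
      (show S.p β₀ δ hβ₀δ (S.proj A δ hδ x) ∈ _ by rwa [p_proj hA])

theorem interior_closure_proj_inter_nonempty_succ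
    (hskel : ∀ (α β : Ordinal.{u}) (h : α ≤ β), β < τ → IsSkeletalMap (S.p α β h))
    (hA : S.IsALim A) {U V : Set ↥A} (hU : IsOpen U) {β : Ordinal.{u}} (hβ : succ β < τ)
    (hβV : β ∉ S.rank A V)
    (hUV : (interior (closure (S.proj A β ((lt_succ β).trans hβ) '' U)) ∩
      interior (closure (S.proj A β ((lt_succ β).trans hβ) '' V))).Nonempty) :
    (interior (closure (S.proj A (succ β) hβ '' U)) ∩
      interior (closure (S.proj A (succ β) hβ '' V))).Nonempty := by
  set W := interior (closure (S.proj A β ((lt_succ β).trans hβ) '' U)) ∩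
    interior (closure (S.proj A β ((lt_succ β).trans hβ) '' V))
  have hW : IsOpen W := isOpen_interior.inter isOpen_interior
  set U₁ := U ∩ S.proj A β ((lt_succ β).trans hβ) ⁻¹' W
  have hU₁ : U₁.Nonempty := by
    obtain ⟨w, hw⟩ := hUV
    obtain ⟨_, ⟨x, hx, rfl⟩, hxW⟩ :=
      (closure_inter_open_nonempty_iff hW).1 ⟨w, interior_subset hw.1, hw⟩
    exact ⟨x, hx, hxW⟩
  have hN := (proj_isSkeletalMap hskel hA (succ β) hβ).2 U₁
    (hU.inter (hW.preimage (proj_continuous _ _))) hU₁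
  have hNW : interior (closure (S.proj A (succ β) hβ '' U₁))
      ⊆ closure (S.p β (succ β) (le_succ β) ⁻¹' W) := by
    refine interior_subset.trans (closure_mono ?_)
    rintro _ ⟨x, hx, rfl⟩
    rw [Set.mem_preimage, p_proj hA.1]
    exact hx.2
  obtain ⟨t, htW, htN⟩ := (closure_inter_open_nonempty_iff isOpen_interior).1
    (hN.mono fun t ht => ⟨hNW ht, ht⟩)
  exact ⟨t, interior_mono (closure_mono (Set.image_mono Set.inter_subset_left)) htN,
    preimage_interior_closure_subset_succ hβ hβV htW.2⟩

theorem interior_closure_proj_inter_nonempty_of_le (hac : S.AlmostContinuous)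
    (hskel : ∀ (α β : Ordinal.{u}) (h : α ≤ β), β < τ → IsSkeletalMap (S.p α β h))
    (hA : S.IsALim A) {U V : Set ↥A} (hU : IsOpen U) (hV : IsOpen V)
    (hqU : (S.rank A U).Finite) (hqV : (S.rank A V).Finite) {γ : Ordinal.{u}} (hγ : γ < τ)
    (hrank : ∀ β : Ordinal.{u}, γ ≤ β → ¬(β ∈ S.rank A U ∧ β ∈ S.rank A V))
    (hUV : (interior (closure (S.proj A γ hγ '' U)) ∩
      interior (closure (S.proj A γ hγ '' V))).Nonempty)
    {β : Ordinal.{u}} (hγβ : γ ≤ β) (hβ : β < τ) :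
    (interior (closure (S.proj A β hβ '' U)) ∩
      interior (closure (S.proj A β hβ '' V))).Nonempty := by
  induction β using WellFoundedLT.induction with
  | _ β IH =>
  rcases hγβ.eq_or_lt with rfl | hlt
  · exact hUV
  rcases Ordinal.zero_or_succ_or_isSuccLimit β with rfl | ⟨σ, rfl⟩ | hlim
  · exact absurd hlt (not_lt_bot (a := γ))
  · have hγσ : γ ≤ σ := lt_succ_iff.1 hlt
    have hσ := IH σ (lt_succ σ) hγσ ((lt_succ σ).trans hβ)
    rcases not_and_or.1 (hrank σ hγσ) with hσU | hσV
    · rw [Set.inter_comm] at hσ ⊢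
      exact interior_closure_proj_inter_nonempty_succ hskel hA hV hβ hσU hσ
    · exact interior_closure_proj_inter_nonempty_succ hskel hA hU hβ hσV hσ
  · obtain ⟨α, ⟨hγα, hαβ⟩, hα⟩ := Ordinal.exists_disjoint_Ico (hqU.union hqV) hlt
      fun σ _ hσ => hlim.succ_lt hσ
    obtain ⟨hαU, hαV⟩ := Set.disjoint_union_left.1 hα
    obtain ⟨w, hwU, hwV⟩ := IH α hαβ hγα (hαβ.trans hβ)
    obtain ⟨z, rfl⟩ := S.p_surj α β hαβ.le hβ w
    exact ⟨z, preimage_interior_closure_subset hac hA.1 U hαβ.le hβ hαU hwU,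
      preimage_interior_closure_subset hac hA.1 V hαβ.le hβ hαV hwV⟩

end InvSystem

open Order InvSystem in
/-- For an almost continuous inverse system with skeletal bonding maps and `A = a-lim S`:
if `U, V ⊆ A` are open with finite ranks and disjoint closures, and
`q(U) ∩ q(V) ∩ [γ, τ) = ∅` for some `γ < τ`, then
`Int cl p_γ(U)` and `Int cl p_γ(V)` are disjoint. -/
theorem interior_closure_proj_disjoint {τ : Ordinal.{u}} (S : InvSystem τ)
    (A : Set (∀ α : {o : Ordinal.{u} // o < τ}, S.X α.1))
    (hac : S.AlmostContinuous)
    (hskel : ∀ (α β : Ordinal.{u}) (h : α ≤ β), β < τ → IsSkeletalMap (S.p α β h))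
    (hA : S.IsALim A)
    (U V : Set ↥A) (hU : IsOpen U) (hV : IsOpen V)
    (hqU : (S.rank A U).Finite) (hqV : (S.rank A V).Finite)
    (hdisj : closure U ∩ closure V = ∅)
    (γ : Ordinal.{u}) (hγ : γ < τ)
    (hrank : ∀ β : Ordinal.{u}, γ ≤ β → ¬(β ∈ S.rank A U ∧ β ∈ S.rank A V)) :
    interior (closure (S.proj A γ hγ '' U)) ∩
      interior (closure (S.proj A γ hγ '' V)) = ∅ := by
  refine Set.not_nonempty_iff_eq_empty.1 fun hUV => ?_
  obtain ⟨β₀, ⟨hγβ₀, hβ₀⟩, hβ₀UV⟩ := Ordinal.exists_disjoint_Ico (hqU.union hqV) hγ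
    fun σ hσ _ => hσ.elim (fun ⟨h, _⟩ => h) fun ⟨h, _⟩ => h
  obtain ⟨hβ₀U, hβ₀V⟩ := Set.disjoint_union_left.1 hβ₀UV
  obtain ⟨w, hwU, hwV⟩ := interior_closure_proj_inter_nonempty_of_le hac hskel hA hU hV hqU hqV
    hγ hrank hUV hγβ₀ hβ₀
  obtain ⟨x, rfl⟩ := hA.2 β₀ hβ₀ w
  have hx : x ∈ closure U ∩ closure V :=
    ⟨mem_closure_of_proj_mem_interior_closure hac hA.1 hβ₀ hβ₀U hwU,
      mem_closure_of_proj_mem_interior_closure hac hA.1 hβ₀ hβ₀V hwV⟩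
  exact Set.eq_empty_iff_forall_notMem.1 hdisj x hx
end

section
/- Let S = {X_α, p^β_α, α < β < τ} be an almost continuous inverse system with nearly open bonding maps and X = a-lim S. Then X is regularly embedded in the product ∏_{α<τ} X_α. -/
open Topology Order

universe u

open Set

/-! For an open `U ⊆ X`, `e(U)` is the union of the boxes of all good data `(α, W, J)` with
`p_α⁻¹(W) ⊆ U`. Here `J` is a finite set of milestones below `α`, and goodness says that at every
other level `γ < α` a point whose projections to the milestones lie in the shadows
`Int cl p^α_δ(W)` is already in `cl p^α_γ(W)`. The box constrains only the coordinates `α` and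
`δ ∈ J`, so it is open. Every neighbourhood contains a good one, by transfinite induction: nearly
openness handles successors and almost continuity reduces a limit level to a smaller one.

If boxes over `W₁ ⊆ X_α` and `W₂ ⊆ X_β`, `α < β`, share a point `z`, one climbs through the finitely
many milestones below `α`, finding threads of `X` over `W₁` that satisfy more and more of the
constraints of `W₂` and vice versa: at a common milestone `z` supplies a point in both constraint
sets, at any other one a thread over the opposite side does, and goodness plus surjectivity of the
limit projections turn that point into a new thread. At level `α` this yields a point of `W₁` in
`cl p^β_α(W₂)`, hence a thread over both. -/

theorem Set.inter_Iic_subset_inter_Iio {α : Type*} [PartialOrder α] {s : Set α} {a : α}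
    (ha : a ∉ s) : s ∩ Iic a ⊆ s ∩ Iio a :=
  fun _ ⟨hs, hle⟩ => ⟨hs, hle.lt_of_ne fun h => ha (h ▸ hs)⟩

def IsRegularlyEmbedded {Z : Type*} [TopologicalSpace Z] (X : Set Z) : Prop :=
  ∃ e : Set X → Set Z, (∀ U : Set X, IsOpen U → IsOpen (e U)) ∧
    (∀ U V : Set X, IsOpen U → IsOpen V → U ∩ V = ∅ → e U ∩ e V = ∅) ∧
    (∀ U : Set X, IsOpen U → Subtype.val ⁻¹' e U = U)

theorem isRegularlyEmbedded_of_subsingleton {Z : Type*} [TopologicalSpace Z] [Subsingleton Z]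
    (X : Set Z) : IsRegularlyEmbedded X := by
  refine ⟨fun U => {_z | U.Nonempty}, fun _ _ => isOpen_const, ?_, ?_⟩
  · rintro U V - - hUV
    refine eq_empty_of_forall_notMem fun _ ⟨⟨x, hx⟩, ⟨y, hy⟩⟩ => ?_
    rw [Subsingleton.elim y x] at hy
    exact eq_empty_iff_forall_notMem.mp hUV x ⟨hx, hy⟩
  · intro U _
    ext x
    exact ⟨fun ⟨y, hy⟩ => Subsingleton.elim y x ▸ hy, fun hx => ⟨x, hx⟩⟩

theorem IsNearlyOpenMap.preimage_closure_subset_closure_preimage {X Y : Type*}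
    [TopologicalSpace X] [TopologicalSpace Y] {f : X → Y} (hf : IsNearlyOpenMap f)
    {G : Set Y} (hG : IsOpen G) : f ⁻¹' closure G ⊆ closure (f ⁻¹' G) := by
  intro y hy
  rw [mem_closure_iff]
  intro O hO hyO
  obtain ⟨g, hgO, hgG⟩ := mem_closure_iff.mp hy _ isOpen_interior (hf O hO ⟨y, hyO, rfl⟩)
  obtain ⟨-, ⟨-, hxG⟩, x, hxO, rfl⟩ :=
    mem_closure_iff.mp (interior_subset hgO) _ (isOpen_interior.inter hG) ⟨hgO, hgG⟩
  exact ⟨x, hxO, hxG⟩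

namespace InvSystem

variable {τ : Ordinal.{u}} (S : InvSystem τ)

abbrev Product : Type (u + 1) := ∀ a : {o : Ordinal.{u} // o < τ}, S.X a.1

def HasNearlyOpenBonds : Prop :=
  ∀ α β (h : α ≤ β), β < τ → IsNearlyOpenMap (S.p α β h)

theorem image_p_trans {δ γ β : Ordinal.{u}} (h₁ : δ ≤ γ) (h₂ : γ ≤ β) (W : Set (S.X β)) :
    S.p δ β (h₁.trans h₂) '' W = S.p δ γ h₁ '' (S.p γ β h₂ '' W) := by
  rw [image_image]
  exact image_congr fun x _ => (S.p_comp δ γ β h₁ h₂ x).symm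

theorem preimage_p_trans {δ γ β : Ordinal.{u}} (h₁ : δ ≤ γ) (h₂ : γ ≤ β) (G : Set (S.X δ)) :
    S.p δ β (h₁.trans h₂) ⁻¹' G = S.p γ β h₂ ⁻¹' (S.p δ γ h₁ ⁻¹' G) := by
  ext x
  simp only [mem_preimage, S.p_comp]

theorem closure_image_p_of_closure_eq {μ α : Ordinal.{u}} (hμα : μ ≤ α) {W : Set (S.X α)}
    {G : Set (S.X μ)} (h : closure (S.p μ α hμα '' W) = closure G) {δ : Ordinal.{u}}
    (hδ : δ ≤ μ) : closure (S.p δ α (hδ.trans hμα) '' W) = closure (S.p δ μ hδ '' G) := by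
  rw [S.image_p_trans hδ hμα, ← closure_image_closure (S.p_cont δ μ hδ), h,
    closure_image_closure (S.p_cont δ μ hδ)]

def shadow {δ α : Ordinal.{u}} (h : δ ≤ α) (W : Set (S.X α)) : Set (S.X δ) :=
  interior (closure (S.p δ α h '' W))

def underShadows {γ α : Ordinal.{u}} (W : Set (S.X α)) (J : Finset Ordinal.{u}) (hγ : γ ≤ α) :
    Set (S.X γ) :=
  ⋂ δ ∈ J, ⋂ hδ : δ ≤ γ, S.p δ γ hδ ⁻¹' S.shadow (hδ.trans hγ) W

variable {S}

theorem mem_underShadows {γ α : Ordinal.{u}} {W : Set (S.X α)} {J : Finset Ordinal.{u}}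
    {hγ : γ ≤ α} {y : S.X γ} :
    y ∈ S.underShadows W J hγ ↔ ∀ δ ∈ J, ∀ hδ : δ ≤ γ, S.p δ γ hδ y ∈ S.shadow (hδ.trans hγ) W := by
  simp [underShadows]

theorem isOpen_underShadows {γ α : Ordinal.{u}} (W : Set (S.X α)) (J : Finset Ordinal.{u})
    (hγ : γ ≤ α) : IsOpen (S.underShadows W J hγ) :=
  J.finite_toSet.isOpen_biInter fun _ _ => isOpen_iInter_of_finite fun hδ =>
    isOpen_interior.preimage (S.p_cont _ γ hδ)

variable (S) in
structure IsGood {α : Ordinal.{u}} (W : Set (S.X α)) (J : Finset Ordinal.{u}) : Prop where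
  isOpen : IsOpen W
  lt : ∀ δ ∈ J, δ < α
  subset_closure_of_notMem : ∀ γ (hγ : γ < α), γ ∉ J →
    S.underShadows W J hγ.le ⊆ closure (S.p γ α hγ.le '' W)

namespace IsGood

variable {α : Ordinal.{u}} {W : Set (S.X α)} {J : Finset Ordinal.{u}}

theorem subset_closure (hW : S.IsGood W J) {γ : Ordinal.{u}} (hγ : γ < α) :
    S.underShadows W J hγ.le ⊆ closure (S.p γ α hγ.le '' W) := by
  by_cases hγJ : γ ∈ J
  · intro y hy
    have hy' := mem_underShadows.mp hy γ hγJ le_rfl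
    rw [S.p_id] at hy'
    exact interior_subset hy'
  · exact hW.subset_closure_of_notMem γ hγ hγJ

theorem insert_subset_closure {μ : Ordinal.{u}} (hμα : μ ≤ α) {G : Set (S.X μ)}
    (hG : S.IsGood G J) (hcl : closure (S.p μ α hμα '' W) = closure G) {γ : Ordinal.{u}}
    (hγμ : γ < μ) (hγJ : γ ∉ J) :
    S.underShadows W (insert μ J) (hγμ.le.trans hμα) ⊆
      closure (S.p γ α (hγμ.le.trans hμα) '' W) := by
  intro y hy
  have hyG : y ∈ S.underShadows G J hγμ.le := by
    refine mem_underShadows.mpr fun δ hδ hδγ => ?_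
    have hshadow : S.shadow ((hδγ.trans hγμ.le).trans hμα) W = S.shadow (hδγ.trans hγμ.le) G :=
      congrArg interior (S.closure_image_p_of_closure_eq hμα hcl (hδγ.trans hγμ.le))
    rw [← hshadow]
    exact mem_underShadows.mp hy δ (Finset.mem_insert_of_mem hδ) hδγ
  rw [S.closure_image_p_of_closure_eq hμα hcl hγμ.le]
  exact hG.subset_closure_of_notMem γ hγμ hγJ hyG

theorem lt_insert {μ : Ordinal.{u}} {G : Set (S.X μ)} (hG : S.IsGood G J) (hμα : μ < α) :
    ∀ δ ∈ insert μ J, δ < α := by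
  intro δ hδ
  rcases Finset.mem_insert.mp hδ with rfl | hδ
  exacts [hμα, (hG.lt δ hδ).trans hμα]

theorem inter_preimage_succ {μ : Ordinal.{u}} {G : Set (S.X μ)} (hG : S.IsGood G J)
    {W : Set (S.X (succ μ))} (hW : IsOpen W) (hGW : G ⊆ S.shadow (le_succ μ) W) :
    S.IsGood (W ∩ S.p μ (succ μ) (le_succ μ) ⁻¹' G) (insert μ J) where
  isOpen := hW.inter (hG.isOpen.preimage (S.p_cont _ _ _))
  lt := hG.lt_insert (lt_succ μ)
  subset_closure_of_notMem γ hγ hγJ := by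
    have hγμ : γ < μ :=
      (lt_succ_iff.mp hγ).lt_of_ne fun h => hγJ (h ▸ Finset.mem_insert_self μ J)
    refine hG.insert_subset_closure (le_succ μ) ?_ hγμ fun h => hγJ (Finset.mem_insert_of_mem h)
    have hG_sub : G ⊆ closure (S.p μ (succ μ) (le_succ μ) '' W ∩ G) := fun g hg => by
      rw [inter_comm]
      exact hG.isOpen.inter_closure ⟨hg, interior_subset (hGW hg)⟩
    rw [image_inter_preimage]
    exact (closure_mono inter_subset_right).antisymm (closure_minimal hG_sub isClosed_closure)

theorem preimage (hno : S.HasNearlyOpenBonds) {μ : Ordinal.{u}} (hμα : μ < α) (hα : α < τ)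
    {G : Set (S.X μ)} (hG : S.IsGood G J) :
    S.IsGood (S.p μ α hμα.le ⁻¹' G) (insert μ J) where
  isOpen := hG.isOpen.preimage (S.p_cont _ _ _)
  lt := hG.lt_insert hμα
  subset_closure_of_notMem γ hγ hγJ := by
    have himage := image_preimage_eq G (S.p_surj μ α hμα.le hα)
    rcases lt_or_gt_of_ne fun h : γ = μ => hγJ (h ▸ Finset.mem_insert_self μ J) with hγμ | hμγ
    · refine hG.insert_subset_closure hμα.le ?_ hγμ fun h => hγJ (Finset.mem_insert_of_mem h)
      rw [himage]
    · intro y hy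
      have hyG : S.p μ γ hμγ.le y ∈ closure G := by
        have hy' := mem_underShadows.mp hy μ (Finset.mem_insert_self μ J) hμγ.le
        rw [shadow, himage] at hy'
        exact interior_subset hy'
      rw [S.preimage_p_trans hμγ.le hγ.le, image_preimage_eq _ (S.p_surj γ α hγ.le hα)]
      exact (hno μ γ hμγ.le (hγ.trans hα)).preimage_closure_subset_closure_preimage
        hG.isOpen hyG

end IsGood

variable (S)

theorem exists_coord_subset_of_mem_lim {γ : Ordinal.{u}} (hγ : 0 < γ)
    {f : ∀ a : {o : Ordinal.{u} // o < γ}, S.X a.1} (hf : f ∈ S.lim γ)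
    {O : Set (∀ a : {o : Ordinal.{u} // o < γ}, S.X a.1)} (hO : IsOpen O) (hfO : f ∈ O) :
    ∃ β, ∃ hβ : β < γ, ∃ W : Set (S.X β), IsOpen W ∧ f ⟨β, hβ⟩ ∈ W ∧
      ∀ g ∈ S.lim γ, g ⟨β, hβ⟩ ∈ W → g ∈ O := by
  obtain ⟨I, V, hV, hIV⟩ := isOpen_pi_iff.mp hO f hfO
  set β := I.sup fun a => a.1
  have hβ : β < γ := (Finset.sup_lt_iff (Ordinal.bot_eq_zero ▸ hγ)).mpr fun a _ => a.2
  refine ⟨β, hβ, ⋂ a ∈ I, ⋂ h : a.1 ≤ β, S.p a.1 β h ⁻¹' V a,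
    I.finite_toSet.isOpen_biInter fun a ha => isOpen_iInter_of_finite fun h =>
      (hV a ha).1.preimage (S.p_cont _ _ h), ?_, fun g hg hgW => hIV fun a ha => ?_⟩
  · simp only [mem_iInter, mem_preimage]
    intro a ha h
    rw [hf a ⟨β, hβ⟩ h]
    exact (hV a ha).2
  · simp only [mem_iInter, mem_preimage] at hgW
    rw [← hg a ⟨β, hβ⟩ (Finset.le_sup (f := fun a => a.1) ha)]
    exact hgW a ha _

theorem exists_preimage_subset_of_isEmbedding {α : Ordinal.{u}} (hα : 0 < α)
    (hemb : IsEmbedding (S.diag α)) {W : Set (S.X α)} (hW : IsOpen W) {x : S.X α} (hx : x ∈ W) :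
    ∃ μ, ∃ hμ : μ < α, ∃ G : Set (S.X μ), IsOpen G ∧ S.p μ α hμ.le x ∈ G ∧
      S.p μ α hμ.le ⁻¹' G ⊆ W := by
  obtain ⟨O, hO, rfl⟩ := (IsEmbedding.subtypeVal.comp hemb).isInducing.isOpen_iff.mp hW
  obtain ⟨μ, hμ, G, hG, hxG, hGO⟩ := S.exists_coord_subset_of_mem_lim hα (S.diag α x).2 hO hx
  exact ⟨μ, hμ, G, hG, hxG, fun y hy => hGO _ (S.diag α y).2 hy⟩

theorem exists_isGood (hno : S.HasNearlyOpenBonds) (hac : S.AlmostContinuous) {α : Ordinal.{u}}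
    (hα : α < τ) {W : Set (S.X α)} (hW : IsOpen W) {x : S.X α} (hx : x ∈ W) :
    ∃ W₀ J, x ∈ W₀ ∧ W₀ ⊆ W ∧ S.IsGood W₀ J := by
  induction α using Ordinal.limitRecOn with
  | zero =>
    exact ⟨W, ∅, hx, subset_rfl, hW, by simp, fun γ hγ => absurd hγ (zero_le (a := γ)).not_gt⟩
  | add_one μ ih =>
    obtain ⟨G, J, hxG, hGW, hG⟩ := ih ((lt_succ μ).trans hα) isOpen_interior
      (hno μ (succ μ) (le_succ μ) hα W hW (mem_image_of_mem _ hx))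
    exact ⟨W ∩ S.p μ (succ μ) (le_succ μ) ⁻¹' G, insert μ J, ⟨hx, hxG⟩, inter_subset_left,
      hG.inter_preimage_succ hW hGW⟩
  | limit α hlim ih =>
    obtain ⟨μ, hμα, G', hG', hxG', hG'W⟩ :=
      S.exists_preimage_subset_of_isEmbedding hlim.pos (hac α hα hlim).1 hW hx
    obtain ⟨G, J, hxG, hGG', hG⟩ := ih μ hμα (hμα.trans hα) hG' hxG'
    exact ⟨_, _, hxG, (preimage_mono hGG').trans hG'W, hG.preimage hno hμα hα⟩

def ShadowedOn {α : Ordinal.{u}} (W : Set (S.X α)) (K : Set Ordinal.{u}) (x : S.Product) : Prop :=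
  ∀ δ (hδτ : δ < τ) (hδ : δ ≤ α), δ ∈ K → x ⟨δ, hδτ⟩ ∈ S.shadow hδ W

def box {α : Ordinal.{u}} (hα : α < τ) (W : Set (S.X α)) (J : Finset Ordinal.{u}) :
    Set S.Product :=
  (fun z : S.Product => z ⟨α, hα⟩) ⁻¹' W ∩
    ⋂ δ ∈ J, ⋂ hδ : δ < α, (fun z : S.Product => z ⟨δ, hδ.trans hα⟩) ⁻¹' S.underShadows W J hδ.le

def extension (A : Set S.Product) (U : Set A) : Set S.Product :=
  ⋃ (α) (hα : α < τ) (W : Set (S.X α)) (J : Finset Ordinal.{u})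
    (_ : S.IsGood W J ∧ S.proj A α hα ⁻¹' W ⊆ U), S.box hα W J

variable {S}

theorem ShadowedOn.mono {α : Ordinal.{u}} {W : Set (S.X α)} {K K' : Set Ordinal.{u}}
    {x : S.Product} (h : S.ShadowedOn W K' x) (hK : K ⊆ K') : S.ShadowedOn W K x :=
  fun δ hδτ hδ hδK => h δ hδτ hδ (hK hδK)

theorem mem_box {α : Ordinal.{u}} {hα : α < τ} {W : Set (S.X α)} {J : Finset Ordinal.{u}}
    {z : S.Product} :
    z ∈ S.box hα W J ↔ z ⟨α, hα⟩ ∈ W ∧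
      ∀ δ ∈ J, ∀ hδ : δ < α, z ⟨δ, hδ.trans hα⟩ ∈ S.underShadows W J hδ.le := by
  simp [box]

theorem isOpen_box {α : Ordinal.{u}} (hα : α < τ) {W : Set (S.X α)} (hW : IsOpen W)
    (J : Finset Ordinal.{u}) : IsOpen (S.box hα W J) :=
  (hW.preimage (continuous_apply (⟨α, hα⟩ : {o // o < τ}))).inter <|
    J.finite_toSet.isOpen_biInter fun δ _ => isOpen_iInter_of_finite fun hδ : δ < α =>
      (isOpen_underShadows W J hδ.le).preimage (continuous_apply (⟨δ, hδ.trans hα⟩ : {o // o < τ}))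

variable (S) in
theorem isOpen_extension (A : Set S.Product) (U : Set A) : IsOpen (S.extension A U) :=
  isOpen_iUnion fun _ => isOpen_iUnion fun hα => isOpen_iUnion fun _ => isOpen_iUnion fun J =>
    isOpen_iUnion fun h => isOpen_box hα h.1.isOpen J

namespace IsALim

variable {A : Set S.Product}

theorem p_apply (hA : S.IsALim A) (u : A) {γ α : Ordinal.{u}} (h : γ ≤ α) (hα : α < τ) :
    S.p γ α h (u.1 ⟨α, hα⟩) = u.1 ⟨γ, h.trans_lt hα⟩ :=
  hA.1 u.2 ⟨γ, h.trans_lt hα⟩ ⟨α, hα⟩ h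

theorem mem_underShadows_iff (hA : S.IsALim A) (u : A) {γ α : Ordinal.{u}} (hγ : γ ≤ α)
    (hγτ : γ < τ) {W : Set (S.X α)} {J : Finset Ordinal.{u}} :
    u.1 ⟨γ, hγτ⟩ ∈ S.underShadows W J hγ ↔ S.ShadowedOn W (↑J ∩ Iic γ) u.1 := by
  rw [mem_underShadows]
  constructor
  · rintro h δ - hδ ⟨hδJ, hδγ⟩
    rw [← hA.p_apply u hδγ hγτ]
    exact h δ hδJ hδγ
  · intro h δ hδJ hδγ
    rw [hA.p_apply u hδγ hγτ]
    exact h δ _ _ ⟨hδJ, hδγ⟩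

theorem shadowedOn (hA : S.IsALim A) (hno : S.HasNearlyOpenBonds) (u : A) {α : Ordinal.{u}}
    (hα : α < τ) {W : Set (S.X α)} (hW : IsOpen W) (hu : u.1 ⟨α, hα⟩ ∈ W) (K : Set Ordinal.{u}) :
    S.ShadowedOn W K u.1 := by
  intro δ _ hδ _
  rw [← hA.p_apply u hδ hα]
  exact hno δ α hδ hα W hW (mem_image_of_mem _ hu)

theorem exists_mem_of_mem_closure (hA : S.IsALim A) {α γ : Ordinal.{u}} (hα : α < τ)
    (hγ : γ ≤ α) {W : Set (S.X α)} {O : Set (S.X γ)} (hO : IsOpen O) {o : S.X γ} (ho : o ∈ O)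
    (hcl : o ∈ closure (S.p γ α hγ '' W)) :
    ∃ u : A, u.1 ⟨α, hα⟩ ∈ W ∧ u.1 ⟨γ, hγ.trans_lt hα⟩ ∈ O := by
  obtain ⟨-, hO', w, hw, rfl⟩ := mem_closure_iff.mp hcl O hO ho
  obtain ⟨u, hu⟩ := hA.2 α hα w
  change u.1 ⟨α, hα⟩ = w at hu
  subst hu
  exact ⟨u, hw, hA.p_apply u hγ hα ▸ hO'⟩

variable {α β : Ordinal.{u}} {hα : α < τ} {hβ : β < τ} {W₁ : Set (S.X α)} {W₂ : Set (S.X β)}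
  {J₁ J₂ : Finset Ordinal.{u}} {z : S.Product}

theorem exists_shadowedOn_Iic (hA : S.IsALim A) (hno : S.HasNearlyOpenBonds)
    (hG₁ : S.IsGood W₁ J₁) (hG₂ : S.IsGood W₂ J₂)
    (hz₁ : z ∈ S.box hα W₁ J₁) (hz₂ : z ∈ S.box hβ W₂ J₂) {γ : Ordinal.{u}} (hγα : γ < α)
    (hγβ : γ < β) (hu : ∃ u : A, u.1 ⟨α, hα⟩ ∈ W₁ ∧ S.ShadowedOn W₂ (↑J₂ ∩ Iio γ) u.1)
    (hv : ∃ v : A, v.1 ⟨β, hβ⟩ ∈ W₂ ∧ S.ShadowedOn W₁ (↑J₁ ∩ Iio γ) v.1) :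
    ∃ u : A, u.1 ⟨α, hα⟩ ∈ W₁ ∧ S.ShadowedOn W₂ (↑J₂ ∩ Iic γ) u.1 := by
  by_cases hγ₂ : γ ∈ J₂
  · obtain ⟨o, ho⟩ : (S.underShadows W₁ J₁ hγα.le ∩ S.underShadows W₂ J₂ hγβ.le).Nonempty := by
      by_cases hγ₁ : γ ∈ J₁
      · exact ⟨z ⟨γ, hγα.trans hα⟩, (mem_box.mp hz₁).2 γ hγ₁ hγα, (mem_box.mp hz₂).2 γ hγ₂ hγβ⟩
      · obtain ⟨v, hvW, hv⟩ := hv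
        exact ⟨v.1 ⟨γ, hγα.trans hα⟩,
          (hA.mem_underShadows_iff v _ _).mpr (hv.mono (inter_Iic_subset_inter_Iio hγ₁)),
          (hA.mem_underShadows_iff v _ _).mpr (hA.shadowedOn hno v hβ hG₂.isOpen hvW _)⟩
    obtain ⟨u, huW, huO⟩ := hA.exists_mem_of_mem_closure hα hγα.le
      ((isOpen_underShadows _ _ _).inter (isOpen_underShadows _ _ _)) ho
      (hG₁.subset_closure hγα ho.1)
    exact ⟨u, huW, (hA.mem_underShadows_iff u _ _).mp huO.2⟩
  · obtain ⟨u, huW, hu⟩ := hu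
    exact ⟨u, huW, hu.mono (inter_Iic_subset_inter_Iio hγ₂)⟩

theorem exists_shadowedOn_Iio (hA : S.IsALim A) (hno : S.HasNearlyOpenBonds)
    (hG₁ : S.IsGood W₁ J₁) (hG₂ : S.IsGood W₂ J₂) (hαβ : α < β)
    (hz₁ : z ∈ S.box hα W₁ J₁) (hz₂ : z ∈ S.box hβ W₂ J₂) {γ : Ordinal.{u}} (hγα : γ ≤ α) :
    (∃ u : A, u.1 ⟨α, hα⟩ ∈ W₁ ∧ S.ShadowedOn W₂ (↑J₂ ∩ Iio γ) u.1) ∧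
      (∃ v : A, v.1 ⟨β, hβ⟩ ∈ W₂ ∧ S.ShadowedOn W₁ (↑J₁ ∩ Iio γ) v.1) := by
  induction γ using WellFoundedLT.induction with
  | _ γ ih =>
  set M := (J₁ ∪ J₂).filter (· < γ)
  rcases M.eq_empty_or_nonempty with hM | hM
  · have hnone : ∀ δ ∈ J₁ ∪ J₂, ¬δ < γ := fun δ hδ hδγ =>
      Finset.eq_empty_iff_forall_notMem.mp hM δ (Finset.mem_filter.mpr ⟨hδ, hδγ⟩)
    obtain ⟨u, hu⟩ := hA.2 α hα (z ⟨α, hα⟩)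
    obtain ⟨v, hv⟩ := hA.2 β hβ (z ⟨β, hβ⟩)
    change u.1 ⟨α, hα⟩ = _ at hu
    change v.1 ⟨β, hβ⟩ = _ at hv
    exact ⟨⟨u, hu ▸ (mem_box.mp hz₁).1, fun δ _ _ ⟨hδ, hδγ⟩ =>
        absurd hδγ (hnone δ (Finset.mem_union_right _ hδ))⟩,
      ⟨v, hv ▸ (mem_box.mp hz₂).1, fun δ _ _ ⟨hδ, hδγ⟩ =>
        absurd hδγ (hnone δ (Finset.mem_union_left _ hδ))⟩⟩
  · set μ := M.max' hM
    have hμγ : μ < γ := (Finset.mem_filter.mp (M.max'_mem hM)).2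
    have hle : ∀ δ ∈ J₁ ∪ J₂, δ < γ → δ ≤ μ := fun δ hδ hδγ =>
      M.le_max' δ (Finset.mem_filter.mpr ⟨hδ, hδγ⟩)
    have hμα : μ < α := hμγ.trans_le hγα
    obtain ⟨hu, hv⟩ := ih _ hμγ hμα.le
    obtain ⟨u, huW, huμ⟩ := hA.exists_shadowedOn_Iic hno hG₁ hG₂ hz₁ hz₂ hμα (hμα.trans hαβ) hu hv
    obtain ⟨v, hvW, hvμ⟩ := hA.exists_shadowedOn_Iic hno hG₂ hG₁ hz₂ hz₁ (hμα.trans hαβ) hμα hv hu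
    exact ⟨⟨u, huW, huμ.mono fun δ ⟨hδ, hδγ⟩ => ⟨hδ, hle δ (Finset.mem_union_right _ hδ) hδγ⟩⟩,
      ⟨v, hvW, hvμ.mono fun δ ⟨hδ, hδγ⟩ => ⟨hδ, hle δ (Finset.mem_union_left _ hδ) hδγ⟩⟩⟩

theorem exists_mem_mem_of_mem_box_of_lt (hA : S.IsALim A) (hno : S.HasNearlyOpenBonds)
    (hG₁ : S.IsGood W₁ J₁) (hG₂ : S.IsGood W₂ J₂) (hαβ : α < β)
    (hz₁ : z ∈ S.box hα W₁ J₁) (hz₂ : z ∈ S.box hβ W₂ J₂) :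
    ∃ u : A, u.1 ⟨α, hα⟩ ∈ W₁ ∧ u.1 ⟨β, hβ⟩ ∈ W₂ := by
  obtain ⟨o, ho⟩ : (W₁ ∩ S.underShadows W₂ J₂ hαβ.le).Nonempty := by
    by_cases hα₂ : α ∈ J₂
    · exact ⟨z ⟨α, hα⟩, (mem_box.mp hz₁).1, (mem_box.mp hz₂).2 α hα₂ hαβ⟩
    · obtain ⟨⟨u, huW, hu⟩, -⟩ := hA.exists_shadowedOn_Iio hno hG₁ hG₂ hαβ hz₁ hz₂ le_rfl
      exact ⟨u.1 ⟨α, hα⟩, huW,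
        (hA.mem_underShadows_iff u _ _).mpr (hu.mono (inter_Iic_subset_inter_Iio hα₂))⟩
  obtain ⟨v, hvW, hvO⟩ := hA.exists_mem_of_mem_closure hβ hαβ.le
    (hG₁.isOpen.inter (isOpen_underShadows _ _ _)) ho (hG₂.subset_closure hαβ ho.2)
  exact ⟨v, hvO.1, hvW⟩

theorem exists_mem_mem_of_mem_box (hA : S.IsALim A) (hno : S.HasNearlyOpenBonds)
    (hG₁ : S.IsGood W₁ J₁) (hG₂ : S.IsGood W₂ J₂)
    (hz₁ : z ∈ S.box hα W₁ J₁) (hz₂ : z ∈ S.box hβ W₂ J₂) :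
    ∃ u : A, u.1 ⟨α, hα⟩ ∈ W₁ ∧ u.1 ⟨β, hβ⟩ ∈ W₂ := by
  rcases lt_trichotomy α β with hαβ | rfl | hβα
  · exact hA.exists_mem_mem_of_mem_box_of_lt hno hG₁ hG₂ hαβ hz₁ hz₂
  · obtain ⟨u, hu⟩ := hA.2 α hα (z ⟨α, hα⟩)
    change u.1 ⟨α, hα⟩ = _ at hu
    exact ⟨u, hu ▸ (mem_box.mp hz₁).1, hu ▸ (mem_box.mp hz₂).1⟩
  · obtain ⟨u, h₂, h₁⟩ := hA.exists_mem_mem_of_mem_box_of_lt hno hG₂ hG₁ hβα hz₂ hz₁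
    exact ⟨u, h₁, h₂⟩

theorem extension_inter_eq_empty (hA : S.IsALim A) (hno : S.HasNearlyOpenBonds) {U V : Set A}
    (hUV : U ∩ V = ∅) : S.extension A U ∩ S.extension A V = ∅ := by
  refine eq_empty_of_forall_notMem fun z ⟨hzU, hzV⟩ => ?_
  simp only [extension, mem_iUnion] at hzU hzV
  obtain ⟨α, hα, W₁, J₁, ⟨hG₁, hW₁U⟩, hz₁⟩ := hzU
  obtain ⟨β, hβ, W₂, J₂, ⟨hG₂, hW₂V⟩, hz₂⟩ := hzV
  obtain ⟨u, hu₁, hu₂⟩ := hA.exists_mem_mem_of_mem_box hno hG₁ hG₂ hz₁ hz₂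
  exact eq_empty_iff_forall_notMem.mp hUV u ⟨hW₁U hu₁, hW₂V hu₂⟩

theorem preimage_extension (hA : S.IsALim A) (hno : S.HasNearlyOpenBonds)
    (hac : S.AlmostContinuous) (hτ : 0 < τ) {U : Set A} (hU : IsOpen U) :
    Subtype.val ⁻¹' S.extension A U = U := by
  refine subset_antisymm (fun x hx => ?_) fun x hx => ?_
  · simp only [mem_preimage, extension, mem_iUnion] at hx
    obtain ⟨α, hα, W, J, ⟨-, hWU⟩, hxW⟩ := hx
    exact hWU (mem_box.mp hxW).1
  · obtain ⟨O, hO, rfl⟩ := isOpen_induced_iff.mp hU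
    obtain ⟨β, hβ, W, hW, hxW, hWO⟩ := S.exists_coord_subset_of_mem_lim hτ (hA.1 x.2) hO hx
    obtain ⟨W₀, J, hxW₀, hW₀W, hG⟩ := S.exists_isGood hno hac hβ hW hxW
    simp only [mem_preimage, extension, mem_iUnion]
    refine ⟨β, hβ, W₀, J, ⟨hG, fun y hy => hWO y.1 (hA.1 y.2) (hW₀W hy)⟩,
      mem_box.mpr ⟨hxW₀, fun δ _ hδ => ?_⟩⟩
    exact (hA.mem_underShadows_iff x _ _).mpr (hA.shadowedOn hno x hβ hG.isOpen hxW₀ _)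

theorem isRegularlyEmbedded (hA : S.IsALim A) (hno : S.HasNearlyOpenBonds)
    (hac : S.AlmostContinuous) (hτ : 0 < τ) : IsRegularlyEmbedded A :=
  ⟨S.extension A, fun U _ => S.isOpen_extension A U,
    fun _ _ _ _ => hA.extension_inter_eq_empty hno, fun _ => hA.preimage_extension hno hac hτ⟩

end IsALim

end InvSystem

open Order InvSystem in
/-- For an almost continuous inverse system with nearly open bonding maps and
`A = a-lim S`, the space `A` is regularly embedded in the product `∏_{α<τ} X_α`. -/
theorem regularly_embedded_in_product {τ : Ordinal.{u}} (S : InvSystem τ)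
    (A : Set (∀ α : {o : Ordinal.{u} // o < τ}, S.X α.1))
    (hac : S.AlmostContinuous)
    (hno : ∀ (α β : Ordinal.{u}) (h : α ≤ β), β < τ →
      Continuous (S.p α β h) ∧ IsNearlyOpenMap (S.p α β h))
    (hA : S.IsALim A) :
    ∃ e : Set ↥A → Set (∀ α : {o : Ordinal.{u} // o < τ}, S.X α.1),
      (∀ U : Set ↥A, IsOpen U → IsOpen (e U)) ∧
      (∀ U V : Set ↥A, IsOpen U → IsOpen V → U ∩ V = ∅ → e U ∩ e V = ∅) ∧
      (∀ U : Set ↥A, IsOpen U → Subtype.val ⁻¹' (e U) = U) := by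
  rcases (zero_le (a := τ)).eq_or_lt with rfl | hτ
  · have : IsEmpty {o : Ordinal.{u} // o < 0} := ⟨fun a => (zero_le (a := a.1)).not_gt a.2⟩
    exact isRegularlyEmbedded_of_subsingleton A
  · exact hA.isRegularlyEmbedded (fun α β h hβ => (hno α β h hβ).2) hac hτ
end
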